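/- arXiv:1307.7491 — 2 statements merged into one kernel-verified Lean document; each statement's English description precedes it below -/
import Mathlib

section
/- Let H ∈ L¹((−1,1), M_{2r}(ℂ)) satisfy H(−x) = H(x)* a.e., and let 𝓦 be the unitary map of the previous statement. Let ℋ on L²((0,1), ℂ^{2r}) be the integral operator (ℋg)(x) = ∫₀¹ H(x−s) g(s) ds, and let ℱ_H on L²((0,1), ℂ^{4r}) be the integral operator with 2×2 block kernel F_H(x,t) = (1/2)·[[H((x−t)/2), H((x+t)/2)], [H(−(x+t)/2), H(−(x−t)/2)]]. Then ℱ_H = 𝓦 ℋ 𝓦⁻¹. -/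
/-!
The substitutions `s = (1 + t) / 2` and `s = (1 - t) / 2` map `(0, 1)` onto the two halves of
`(0, 1)`, with Jacobian `1 / 2`. Under them the first block row of `F_H(x, t)` becomes the kernel
`H((1 + x) / 2 - s)` and the second one `H((1 - x) / 2 - s)`, so the two integrals over `t`
recombine into `(ℋg)((1 ± x) / 2)`. The only analytic input is that `s ↦ H(y - s) g(s)` is
integrable on `(0, 1)` for a.e. `y` (Fubini for a convolution of `L¹` functions), and that this
survives the pullback along `x ↦ (1 ± x) / 2`, which are quasi-measure-preserving.
-/

open MeasureTheory Matrix Set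

section Affine

lemma ae_comp_mul_add {P : ℝ → Prop} {a : ℝ} (ha : a ≠ 0) (b : ℝ) (h : ∀ᵐ y, P y) :
    ∀ᵐ x, P (a * x + b) :=
  ((measurePreserving_add_right volume b).quasiMeasurePreserving.comp
    (Measure.quasiMeasurePreserving_smul volume ha)).ae h

lemma ae_comp_half_add_and_comp_half_sub {P : ℝ → Prop}
    (h : ∀ᵐ y ∂volume.restrict (Ioo (0 : ℝ) 1), P y) :
    ∀ᵐ x ∂volume.restrict (Ioo (0 : ℝ) 1), P ((1 + x) / 2) ∧ P ((1 - x) / 2) := by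
  rw [ae_restrict_iff' measurableSet_Ioo] at h ⊢
  filter_upwards [ae_comp_mul_add (a := 2⁻¹) (by norm_num) 2⁻¹ h,
    ae_comp_mul_add (a := -2⁻¹) (by norm_num) 2⁻¹ h] with x hplus hminus ⟨hx₀, hx₁⟩
  rw [show 2⁻¹ * x + 2⁻¹ = (1 + x) / 2 by ring] at hplus
  rw [show -2⁻¹ * x + 2⁻¹ = (1 - x) / 2 by ring] at hminus
  exact ⟨hplus ⟨by linarith, by linarith⟩, hminus ⟨by linarith, by linarith⟩⟩

variable {E : Type*} [NormedAddCommGroup E]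

lemma MeasureTheory.IntegrableOn.comp_mul_add {f : ℝ → E} {s : Set ℝ} (hs : MeasurableSet s)
    (hf : IntegrableOn f s) {a : ℝ} (ha : a ≠ 0) (b : ℝ) :
    IntegrableOn (fun x => f (a * x + b)) ((fun x => a * x + b) ⁻¹' s) := by
  rw [← integrable_indicator_iff (hs.preimage (by fun_prop))]
  have := ((hf.integrable_indicator hs).comp_add_right b).comp_mul_left' ha
  exact this.congr (.of_forall fun x => (indicator_comp_right (fun x => a * x + b)).symm)

lemma MeasureTheory.IntegrableOn.comp_half_add {φ : ℝ → E} (hφ : IntegrableOn φ (Ioo 0 1)) :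
    IntegrableOn (fun t => φ ((1 + t) / 2)) (Ioo 0 1) := by
  have := (hφ.comp_mul_add measurableSet_Ioo (a := 2⁻¹) (by norm_num) 2⁻¹).mono_set
    fun t (ht : t ∈ Ioo (0 : ℝ) 1) =>
      show _ ∈ Ioo (0 : ℝ) 1 from ⟨by linarith [ht.1], by linarith [ht.2]⟩
  convert this using 3
  ring

lemma MeasureTheory.IntegrableOn.comp_half_sub {φ : ℝ → E} (hφ : IntegrableOn φ (Ioo 0 1)) :
    IntegrableOn (fun t => φ ((1 - t) / 2)) (Ioo 0 1) := by
  have := (hφ.comp_mul_add measurableSet_Ioo (a := -2⁻¹) (by norm_num) 2⁻¹).mono_set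
    fun t (ht : t ∈ Ioo (0 : ℝ) 1) =>
      show _ ∈ Ioo (0 : ℝ) 1 from ⟨by linarith [ht.2], by linarith [ht.1]⟩
  convert this using 3
  ring

lemma integral_comp_half_add_add_comp_half_sub [NormedSpace ℝ E] {φ : ℝ → E}
    (hφ : IntegrableOn φ (Ioo 0 1)) :
    ∫ t in Ioo (0 : ℝ) 1, (φ ((1 + t) / 2) + φ ((1 - t) / 2))
      = (2 : ℝ) • ∫ s in Ioo (0 : ℝ) 1, φ s := by
  have hφ' : IntervalIntegrable φ volume 0 1 :=
    (intervalIntegrable_iff_integrableOn_Ioo_of_le zero_le_one).2 hφ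
  rw [integral_add hφ.comp_half_add hφ.comp_half_sub]
  simp only [← integral_Ioc_eq_integral_Ioo, ← intervalIntegral.integral_of_le zero_le_one,
    add_div, sub_div]
  rw [intervalIntegral.integral_comp_add_div (f := φ) (by norm_num),
    intervalIntegral.integral_comp_sub_div (f := φ) (by norm_num)]
  norm_num
  rw [← smul_add, add_comm,
    intervalIntegral.integral_add_adjacent_intervals (hφ'.mono_set ?_) (hφ'.mono_set ?_)]
  all_goals exact uIcc_subset_uIcc (by norm_num [mem_uIcc]) (by norm_num [mem_uIcc])

end Affine

lemma integral_sum_elim {α ι κ E : Type*} [MeasurableSpace α] {μ : Measure α}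
    [Fintype ι] [Fintype κ] [NormedAddCommGroup E] [NormedSpace ℝ E] [CompleteSpace E]
    {f : α → ι → E} {g : α → κ → E} (hf : Integrable f μ) (hg : Integrable g μ) :
    ∫ a, Sum.elim (f a) (g a) ∂μ = Sum.elim (∫ a, f a ∂μ) (∫ a, g a ∂μ) := by
  have hfg : ∀ i, Integrable (fun a => Sum.elim (f a) (g a) i) μ := by
    rintro (i | i)
    exacts [hf.eval i, hg.eval i]
  funext i
  rcases i with i | i
  · simp [eval_integral hfg, eval_integral hf.eval]
  · simp [eval_integral hfg, eval_integral hg.eval]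

section Convolution

variable {𝕜 n : Type*} [RCLike 𝕜] [Fintype n]

/-- `(ℋg)(y) = ∫₀¹ convIntegrand H g y s ds`. -/
def convIntegrand (H : ℝ → Matrix n n 𝕜) (g : ℝ → n → 𝕜) (y s : ℝ) : n → 𝕜 :=
  H (y - s) *ᵥ g s

/- Extending `H` by zero off `(-1, 1)` and `g` by zero off `(0, 1)` turns each entry of the
integrand into that of a convolution of two integrable functions on `ℝ`. -/
lemma ae_integrableOn_convIntegrand {H : ℝ → Matrix n n 𝕜} {g : ℝ → n → 𝕜}
    (hH : ∀ i j, IntegrableOn (fun x => H x i j) (Ioo (-1) 1))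
    (hg : IntegrableOn g (Ioo 0 1)) :
    ∀ᵐ y ∂volume.restrict (Ioo (0 : ℝ) 1), IntegrableOn (convIntegrand H g y) (Ioo 0 1) := by
  have hconv : ∀ᵐ y, ∀ i j, ConvolutionExistsAt ((Ioo 0 1).indicator fun s => g s j)
      ((Ioo (-1) 1).indicator fun x => H x i j) y (ContinuousLinearMap.mul 𝕜 𝕜) := by
    simp only [ae_all_iff]
    exact fun i j => (IntegrableOn.integrable_indicator (hg.eval j) measurableSet_Ioo)
      |>.ae_convolution_exists _ ((hH i j).integrable_indicator measurableSet_Ioo)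
  filter_upwards [ae_restrict_mem measurableSet_Ioo, ae_restrict_of_ae hconv] with y hy hconv
  refine Integrable.of_eval fun i => ?_
  simp only [convIntegrand, mulVec, dotProduct]
  refine integrable_finsetSum _ fun j _ => ?_
  refine ((hconv i j).integrableOn (s := Ioo 0 1)).congr_fun (fun s hs => ?_) measurableSet_Ioo
  have hys : y - s ∈ Ioo (-1 : ℝ) 1 := ⟨by linarith [hy.1, hs.2], by linarith [hy.2, hs.1]⟩
  simp [indicator_of_mem hs, indicator_of_mem hys, mul_comm]

lemma fromBlocks_halfKernel_mulVec (H : ℝ → Matrix n n 𝕜) (g : ℝ → n → 𝕜) (c : 𝕜) (x t : ℝ) :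
    ((1 / 2 : 𝕜) • fromBlocks (H ((x - t) / 2)) (H ((x + t) / 2))
        (H (-((x + t) / 2))) (H (-((x - t) / 2)))) *ᵥ
      Sum.elim (fun i => c * g ((1 + t) / 2) i) (fun i => c * g ((1 - t) / 2) i)
    = Sum.elim
        ((c / 2) • (convIntegrand H g ((1 + x) / 2) ((1 + t) / 2)
          + convIntegrand H g ((1 + x) / 2) ((1 - t) / 2)))
        ((c / 2) • (convIntegrand H g ((1 - x) / 2) ((1 + t) / 2)
          + convIntegrand H g ((1 - x) / 2) ((1 - t) / 2))) := by
  have e₁ : (1 + x) / 2 - (1 + t) / 2 = (x - t) / 2 := by ring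
  have e₂ : (1 + x) / 2 - (1 - t) / 2 = (x + t) / 2 := by ring
  have e₃ : (1 - x) / 2 - (1 + t) / 2 = -((x + t) / 2) := by ring
  have e₄ : (1 - x) / 2 - (1 - t) / 2 = -((x - t) / 2) := by ring
  have hv : Sum.elim (fun i => c * g ((1 + t) / 2) i) (fun i => c * g ((1 - t) / 2) i)
      = Sum.elim (c • g ((1 + t) / 2)) (c • g ((1 - t) / 2)) := rfl
  simp only [convIntegrand, e₁, e₂, e₃, e₄, hv, smul_mulVec, fromBlocks_mulVec,
    Sum.elim_comp_inl, Sum.elim_comp_inr, mulVec_smul]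
  ext (i | i) <;> simp <;> ring

end Convolution

theorem FH_conjugate_of_convolution_general (r : ℕ)
    (H : ℝ → Matrix (Fin (2 * r)) (Fin (2 * r)) ℂ)
    (hHint : ∀ i j, IntegrableOn (fun x => H x i j) (Set.Ioo (-1 : ℝ) 1))
    (g : ℝ → Fin (2 * r) → ℂ)
    (hg : MemLp g 2 (volume.restrict (Set.Ioo (0 : ℝ) 1)))
    (Hg : ℝ → Fin (2 * r) → ℂ)
    (hHg : ∀ x, Hg x = ∫ s in Set.Ioo (0 : ℝ) 1, (H (x - s)).mulVec (g s))
    (Wg : ℝ → Fin (2 * r) ⊕ Fin (2 * r) → ℂ)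
    (hWg : ∀ t, Wg t = Sum.elim
      (fun i => (Real.sqrt 2 : ℂ)⁻¹ * g ((1 + t) / 2) i)
      (fun i => (Real.sqrt 2 : ℂ)⁻¹ * g ((1 - t) / 2) i)) :
    ∀ᵐ x ∂(volume.restrict (Set.Ioo (0 : ℝ) 1)),
      (∫ t in Set.Ioo (0 : ℝ) 1,
          ((1 / 2 : ℂ) • Matrix.fromBlocks
            (H ((x - t) / 2)) (H ((x + t) / 2))
            (H (-((x + t) / 2))) (H (-((x - t) / 2)))).mulVec (Wg t))
        = Sum.elim
            (fun i => (Real.sqrt 2 : ℂ)⁻¹ * Hg ((1 + x) / 2) i)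
            (fun i => (Real.sqrt 2 : ℂ)⁻¹ * Hg ((1 - x) / 2) i) := by
  have hgI : IntegrableOn g (Ioo 0 1) := hg.integrable one_le_two
  filter_upwards [ae_comp_half_add_and_comp_half_sub (ae_integrableOn_convIntegrand hHint hgI)]
    with x ⟨hplus, hminus⟩
  simp_rw [hWg, fromBlocks_halfKernel_mulVec]
  rw [integral_sum_elim ?integrable_plus ?integrable_minus, integral_smul, integral_smul,
    integral_comp_half_add_add_comp_half_sub hplus,
    integral_comp_half_add_add_comp_half_sub hminus, hHg, hHg]
  · congr 1 <;> ext i <;> simp [convIntegrand] <;> ring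
  case integrable_plus => exact (hplus.comp_half_add.add hplus.comp_half_sub).smul (𝕜 := ℂ) _
  case integrable_minus => exact (hminus.comp_half_add.add hminus.comp_half_sub).smul (𝕜 := ℂ) _

/-- Conjugating the convolution operator `ℋ` with kernel `H(x−s)` by the unitary map
`𝓦` gives the integral operator `ℱ_H` with the 2×2 block kernel `F_H(x,t)`:
`ℱ_H = 𝓦 ℋ 𝓦⁻¹`, stated pointwise a.e. as `ℱ_H(𝓦g) = 𝓦(ℋg)`. -/
theorem FH_conjugate_of_convolution (r : ℕ)
    (H : ℝ → Matrix (Fin (2 * r)) (Fin (2 * r)) ℂ)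
    (hHmeas : ∀ i j, Measurable fun x => H x i j)
    (hHint : ∀ i j, IntegrableOn (fun x => H x i j) (Set.Ioo (-1 : ℝ) 1))
    (hHsym : ∀ᵐ x ∂(volume.restrict (Set.Ioo (-1 : ℝ) 1)), H (-x) = (H x)ᴴ)
    (g : ℝ → Fin (2 * r) → ℂ)
    (hg : MemLp g 2 (volume.restrict (Set.Ioo (0 : ℝ) 1)))
    (Hg : ℝ → Fin (2 * r) → ℂ)
    (hHg : ∀ x, Hg x = ∫ s in Set.Ioo (0 : ℝ) 1, (H (x - s)).mulVec (g s))
    (Wg : ℝ → Fin (2 * r) ⊕ Fin (2 * r) → ℂ)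
    (hWg : ∀ t, Wg t = Sum.elim
      (fun i => (Real.sqrt 2 : ℂ)⁻¹ * g ((1 + t) / 2) i)
      (fun i => (Real.sqrt 2 : ℂ)⁻¹ * g ((1 - t) / 2) i)) :
    ∀ᵐ x ∂(volume.restrict (Set.Ioo (0 : ℝ) 1)),
      (∫ t in Set.Ioo (0 : ℝ) 1,
          ((1 / 2 : ℂ) • Matrix.fromBlocks
            (H ((x - t) / 2)) (H ((x + t) / 2))
            (H (-((x + t) / 2))) (H (-((x - t) / 2)))).mulVec (Wg t))
        = Sum.elim
            (fun i => (Real.sqrt 2 : ℂ)⁻¹ * Hg ((1 + x) / 2) i)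
            (fun i => (Real.sqrt 2 : ℂ)⁻¹ * Hg ((1 - x) / 2) i) :=
  FH_conjugate_of_convolution_general r H hHint g hg Hg hHg Wg hWg
end

section
/- Let (λ_j)_{j∈ℤ} be a strictly increasing sequence of reals and (A_j)_{j∈ℤ} nonzero positive semidefinite matrices in M_{2r}(ℂ). For λ ∈ ℝ let Υ₀(λ) : ℂ^{2r} → L²((0,1), ℂ^{2r}) be given by [Υ₀(λ)c](x) = e^{2iλx} c. Suppose Σ_{j∈ℤ} Υ₀(λ_j) A_j Υ₀(λ_j)* = I + ℋ in the strong operator topology, where ℋ is a bounded operator with ker(I + ℋ) = {0}. Then the system of functions { e^{iλ_j t} v : j ∈ ℤ, v ∈ Ran A_j } is complete in L²((−1,1), ℂ^{2r}). -/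
open MeasureTheory ContinuousLinearMap ComplexOrder

/-! The substitution `t = 2x - 1` carries `(0,1)` onto `(-1,1)` and turns
`e^{2iλx} v` into `e^{iλt} (e^{iλ} v)`. So if `g ∈ L²(-1,1)` is orthogonal to every
`e^{iλ_j t} w` with `w ∈ Ran A_j`, then `f(x) = g(2x - 1)` satisfies
`⟪Υ₀(λ_j) A_j u, f⟫ = ½ ⟪e^{iλ_j t} e^{iλ_j} A_j u, g⟫ = 0` for all `u`,
i.e. `A_j Υ₀(λ_j)^* f = 0`.
Every term of the series vanishes, so `(I + ℋ) f = 0`, hence `f = 0` and `g = 0`. -/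

open Set
open scoped InnerProductSpace

lemma measurableEmbedding_mul_sub {a : ℝ} (ha : a ≠ 0) (b : ℝ) :
    MeasurableEmbedding (fun x : ℝ => a * x - b) :=
  (measurableEmbedding_subRight b).comp (measurableEmbedding_mulLeft₀ ha)

lemma map_volume_mul_sub {a : ℝ} (ha : a ≠ 0) (b : ℝ) :
    Measure.map (fun x : ℝ => a * x - b) volume = ENNReal.ofReal |a⁻¹| • volume := by
  rw [show (fun x : ℝ => a * x - b) = (· - b) ∘ (a * ·) from rfl,
    ← Measure.map_map (by fun_prop) (by fun_prop), Real.map_volume_mul_left ha, Measure.map_smul,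
    map_sub_right_eq_self]

lemma measurePreserving_mul_sub_restrict {a : ℝ} (ha : a ≠ 0) (b : ℝ) (s : Set ℝ) :
    MeasurePreserving (fun x : ℝ => a * x - b) (volume.restrict ((fun x => a * x - b) ⁻¹' s))
      (ENNReal.ofReal |a⁻¹| • volume.restrict s) where
  measurable := by fun_prop
  map_eq := by
    rw [← (measurableEmbedding_mul_sub ha b).restrict_map, map_volume_mul_sub ha b,
      Measure.restrict_smul]

lemma preimage_two_mul_sub_one_Ioo : (fun x : ℝ => 2 * x - 1) ⁻¹' Ioo (-1) 1 = Ioo 0 1 := by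
  ext x
  simp only [mem_preimage, mem_Ioo]
  constructor <;> rintro ⟨h₁, h₂⟩ <;> constructor <;> linarith

lemma measurePreserving_two_mul_sub_one :
    MeasurePreserving (fun x : ℝ => 2 * x - 1) (volume.restrict (Ioo 0 1))
      (ENNReal.ofReal 2⁻¹ • volume.restrict (Ioo (-1) 1)) := by
  simpa [preimage_two_mul_sub_one_Ioo] using
    measurePreserving_mul_sub_restrict two_ne_zero 1 (Ioo (-1) 1)

lemma Matrix.IsHermitian.toEuclideanLin_eq_zero_of_forall_inner {𝕜 n : Type*} [RCLike 𝕜]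
    [Fintype n] [DecidableEq n] {A : Matrix n n 𝕜} (hA : A.IsHermitian)
    {c : EuclideanSpace 𝕜 n}
    (h : ∀ u, ⟪A.toEuclideanLin u, c⟫_𝕜 = 0) : A.toEuclideanLin c = 0 :=
  inner_self_eq_zero.mp <| by
    rw [← Matrix.isSymmetric_toEuclideanLin_iff.mpr hA]
    exact h _

section TwoMulSubOne

variable {E : Type*} [NormedAddCommGroup E]

lemma MeasureTheory.MemLp.comp_two_mul_sub_one {g : ℝ → E} {p : ENNReal}
    (hg : MemLp g p (volume.restrict (Ioo (-1) 1))) :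
    MemLp (fun x => g (2 * x - 1)) p (volume.restrict (Ioo 0 1)) :=
  (hg.smul_measure ENNReal.ofReal_ne_top).comp_measurePreserving measurePreserving_two_mul_sub_one

lemma integral_comp_two_mul_sub_one [NormedSpace ℝ E] (g : ℝ → E) :
    ∫ x in Ioo 0 1, g (2 * x - 1) = (2⁻¹ : ℝ) • ∫ t in Ioo (-1) 1, g t := by
  rw [measurePreserving_two_mul_sub_one.integral_comp (measurableEmbedding_mul_sub two_ne_zero 1),
    integral_smul_measure, ENNReal.toReal_ofReal (by norm_num)]

lemma ae_of_ae_comp_two_mul_sub_one {p : ℝ → Prop}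
    (h : ∀ᵐ x ∂volume.restrict (Ioo 0 1), p (2 * x - 1)) :
    ∀ᵐ t ∂volume.restrict (Ioo (-1) 1), p t := by
  rwa [← Measure.ae_ennreal_smul_measure_iff (c := ENNReal.ofReal 2⁻¹) (by norm_num),
    ← measurePreserving_two_mul_sub_one.map_eq,
    (measurableEmbedding_mul_sub two_ne_zero 1).ae_map_iff]

lemma memLp_exp_smul [NormedSpace ℂ E] {ν : Measure ℝ} [IsFiniteMeasure ν] (lam : ℝ) (v : E)
    (p : ENNReal) :
    MemLp (fun t : ℝ => Complex.exp (Complex.I * lam * t) • v) p ν :=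
  MemLp.of_bound (by fun_prop) ‖v‖ <| ae_of_all _ fun t => by
    rw [norm_smul, mul_assoc, ← Complex.ofReal_mul, Complex.norm_exp_I_mul_ofReal, one_mul]

lemma inner_eq_half_inner_of_ae_eq_comp_two_mul_sub_one [InnerProductSpace ℂ E] {lam : ℝ}
    {v : E} {u f : Lp E 2 (volume.restrict (Ioo (0 : ℝ) 1))}
    {F g : Lp E 2 (volume.restrict (Ioo (-1 : ℝ) 1))}
    (hu : u =ᵐ[volume.restrict (Ioo 0 1)] fun x => Complex.exp (2 * Complex.I * lam * x) • v)
    (hf : f =ᵐ[volume.restrict (Ioo 0 1)] fun x => g (2 * x - 1))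
    (hF : F =ᵐ[volume.restrict (Ioo (-1) 1)]
      fun t => Complex.exp (Complex.I * lam * t) • Complex.exp (Complex.I * lam) • v) :
    ⟪u, f⟫_ℂ = 2⁻¹ * ⟪F, g⟫_ℂ := by
  rw [L2.inner_def, L2.inner_def]
  set h : ℝ → ℂ := fun t =>
    ⟪Complex.exp (Complex.I * lam * t) • Complex.exp (Complex.I * lam) • v, g t⟫_ℂ
  calc ∫ x in Ioo 0 1, ⟪u x, f x⟫_ℂ
      = ∫ x in Ioo 0 1, h (2 * x - 1) := by
        refine integral_congr_ae ?_
        filter_upwards [hu, hf] with x hux hfx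
        simp only [h, hux, hfx, smul_smul, ← Complex.exp_add]
        congr 4
        push_cast
        ring
    _ = 2⁻¹ * ∫ t in Ioo (-1) 1, h t := by
        rw [integral_comp_two_mul_sub_one, Complex.real_smul]
        push_cast
        rfl
    _ = 2⁻¹ * ∫ t in Ioo (-1) 1, ⟪F t, g t⟫_ℂ := by
        congr 1
        refine integral_congr_ae ?_
        filter_upwards [hF] with t ht
        rw [ht]

end TwoMulSubOne

theorem completeness_of_exponential_system_general (r : ℕ)
    (lam : ℤ → ℝ)
    (A : ℤ → Matrix (Fin (2 * r)) (Fin (2 * r)) ℂ)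
    (hApsd : ∀ j, (A j).PosSemidef)
    (T : ℤ → (EuclideanSpace ℂ (Fin (2 * r)) →L[ℂ]
      Lp (EuclideanSpace ℂ (Fin (2 * r))) 2 (volume.restrict (Set.Ioo (0 : ℝ) 1))))
    (hT : ∀ j c, ∀ᵐ x ∂(volume.restrict (Set.Ioo (0 : ℝ) 1)),
      (T j c : ℝ → EuclideanSpace ℂ (Fin (2 * r))) x
        = Complex.exp (2 * Complex.I * (lam j : ℂ) * (x : ℂ)) • c)
    (ℋ : Lp (EuclideanSpace ℂ (Fin (2 * r))) 2 (volume.restrict (Set.Ioo (0 : ℝ) 1)) →L[ℂ]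
      Lp (EuclideanSpace ℂ (Fin (2 * r))) 2 (volume.restrict (Set.Ioo (0 : ℝ) 1)))
    (hker : LinearMap.ker (1 + ℋ : _ →L[ℂ] _).toLinearMap = ⊥)
    (hsum : ∀ f, HasSum
      (fun j => T j (LinearMap.toContinuousLinearMap (Matrix.toEuclideanLin (A j))
        (ContinuousLinearMap.adjoint (T j) f)))
      (f + ℋ f)) :
    (Submodule.span ℂ
      {f : Lp (EuclideanSpace ℂ (Fin (2 * r))) 2 (volume.restrict (Set.Ioo (-1 : ℝ) 1)) |
        ∃ j : ℤ, ∃ v : EuclideanSpace ℂ (Fin (2 * r)),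
          v ∈ LinearMap.range (Matrix.toEuclideanLin (A j)) ∧
          ∀ᵐ t ∂(volume.restrict (Set.Ioo (-1 : ℝ) 1)),
            (f : ℝ → EuclideanSpace ℂ (Fin (2 * r))) t
              = Complex.exp (Complex.I * (lam j : ℂ) * (t : ℂ)) • v}).topologicalClosure
      = ⊤ := by
  rw [Submodule.topologicalClosure_eq_top_iff, Submodule.eq_bot_iff]
  intro g hg
  have hf := (Lp.memLp g).comp_two_mul_sub_one
  set f := hf.toLp _
  have hAf : ∀ j, Matrix.toEuclideanLin (A j) (adjoint (T j) f) = 0 := fun j =>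
    (hApsd j).isHermitian.toEuclideanLin_eq_zero_of_forall_inner fun u => by
      set v := Complex.exp (Complex.I * lam j) • Matrix.toEuclideanLin (A j) u
      have hF := memLp_exp_smul (ν := volume.restrict (Ioo (-1) 1)) (lam j) v 2
      have hFg : ⟪hF.toLp _, g⟫_ℂ = 0 := (Submodule.mem_orthogonal _ g).mp hg _ <|
        Submodule.subset_span
          ⟨j, v, Submodule.smul_mem _ _ (LinearMap.mem_range_self _ u), hF.coeFn_toLp⟩
      rw [adjoint_inner_right, inner_eq_half_inner_of_ae_eq_comp_two_mul_sub_one (hT j _)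
        hf.coeFn_toLp hF.coeFn_toLp, hFg, mul_zero]
  have hf0 : f = 0 := by
    have : f + ℋ f = 0 := (hsum f).unique (by simp [hAf])
    exact LinearMap.ker_eq_bot'.mp hker f (by simp [this])
  rw [Lp.eq_zero_iff_ae_eq_zero]
  refine ae_of_ae_comp_two_mul_sub_one ?_
  filter_upwards [hf.coeFn_toLp, Lp.eq_zero_iff_ae_eq_zero.mp hf0] with x hx hx0
  rwa [← hx]

/-- If `Σ_j Υ₀(λ_j) A_j Υ₀(λ_j)* = I + ℋ` strongly with `ker (I + ℋ) = {0}`, then the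
system `{e^{iλ_j t} v : j ∈ ℤ, v ∈ Ran A_j}` is complete in `L²((−1,1), ℂ^{2r})`. -/
theorem completeness_of_exponential_system (r : ℕ)
    (lam : ℤ → ℝ) (hlam : StrictMono lam)
    (A : ℤ → Matrix (Fin (2 * r)) (Fin (2 * r)) ℂ)
    (hAne : ∀ j, A j ≠ 0) (hApsd : ∀ j, (A j).PosSemidef)
    (T : ℤ → (EuclideanSpace ℂ (Fin (2 * r)) →L[ℂ]
      Lp (EuclideanSpace ℂ (Fin (2 * r))) 2 (volume.restrict (Set.Ioo (0 : ℝ) 1))))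
    (hT : ∀ j c, ∀ᵐ x ∂(volume.restrict (Set.Ioo (0 : ℝ) 1)),
      (T j c : ℝ → EuclideanSpace ℂ (Fin (2 * r))) x
        = Complex.exp (2 * Complex.I * (lam j : ℂ) * (x : ℂ)) • c)
    (ℋ : Lp (EuclideanSpace ℂ (Fin (2 * r))) 2 (volume.restrict (Set.Ioo (0 : ℝ) 1)) →L[ℂ]
      Lp (EuclideanSpace ℂ (Fin (2 * r))) 2 (volume.restrict (Set.Ioo (0 : ℝ) 1)))
    (hker : LinearMap.ker (1 + ℋ : _ →L[ℂ] _).toLinearMap = ⊥)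
    (hsum : ∀ f, HasSum
      (fun j => T j (LinearMap.toContinuousLinearMap (Matrix.toEuclideanLin (A j))
        (ContinuousLinearMap.adjoint (T j) f)))
      (f + ℋ f)) :
    (Submodule.span ℂ
      {f : Lp (EuclideanSpace ℂ (Fin (2 * r))) 2 (volume.restrict (Set.Ioo (-1 : ℝ) 1)) |
        ∃ j : ℤ, ∃ v : EuclideanSpace ℂ (Fin (2 * r)),
          v ∈ LinearMap.range (Matrix.toEuclideanLin (A j)) ∧
          ∀ᵐ t ∂(volume.restrict (Set.Ioo (-1 : ℝ) 1)),
            (f : ℝ → EuclideanSpace ℂ (Fin (2 * r))) t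
              = Complex.exp (Complex.I * (lam j : ℂ) * (t : ℂ)) • v}).topologicalClosure
      = ⊤ :=
  completeness_of_exponential_system_general r lam A hApsd T hT ℋ hker hsum
end
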